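/- In the fully confounded observational setting, the probability of benefit θ = P(Y(1) > Y(0)) satisfies the valid upper bound θ ≤ 1 − P(X = 1, Y = 0) − P(X = 0, Y = K−1). -/
import Mathlib


open MeasureTheory

/-- Confounded setting: valid upper bound θ ≤ 1 − p_{10} − p_{0(K−1)}. -/
theorem stmt5 {Ω : Type*} [MeasurableSpace Ω] (P : Measure Ω) [IsProbabilityMeasure P]
    {K : ℕ} (hK : 1 ≤ K) (X : Ω → Fin 2) (Y : Fin 2 → Ω → Fin K)
    (hX : Measurable X) (hY : ∀ x, Measurable (Y x)) :
    (P {ω | Y 0 ω < Y 1 ω}).toReal ≤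
      1 - (P {ω | X ω = 1 ∧ Y (X ω) ω = ⟨0, hK⟩}).toReal
        - (P {ω | X ω = 0 ∧ Y (X ω) ω = ⟨K - 1, by omega⟩}).toReal := by
  set A := {ω | Y 0 ω < Y 1 ω} with hA
  set B := {ω | X ω = 1 ∧ Y (X ω) ω = ⟨0, hK⟩} with hB
  set C := {ω | X ω = 0 ∧ Y (X ω) ω = (⟨K - 1, by omega⟩ : Fin K)} with hC
  have hBeq : B = X ⁻¹' {1} ∩ (Y 1) ⁻¹' {⟨0, hK⟩} := by
    ext ω
    simp only [hB, Set.mem_setOf_eq, Set.mem_inter_iff, Set.mem_preimage,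
      Set.mem_singleton_iff]
    constructor
    · rintro ⟨h1, h2⟩; rw [h1] at h2; exact ⟨h1, h2⟩
    · rintro ⟨h1, h2⟩; rw [h1]; exact ⟨rfl, h2⟩
  have hCeq : C = X ⁻¹' {0} ∩ (Y 0) ⁻¹' {⟨K - 1, by omega⟩} := by
    ext ω
    simp only [hC, Set.mem_setOf_eq, Set.mem_inter_iff, Set.mem_preimage,
      Set.mem_singleton_iff]
    constructor
    · rintro ⟨h1, h2⟩; rw [h1] at h2; exact ⟨h1, h2⟩
    · rintro ⟨h1, h2⟩; rw [h1]; exact ⟨rfl, h2⟩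
  have hmB : MeasurableSet B := by
    rw [hBeq]
    exact (hX (measurableSet_singleton _)).inter ((hY 1) (measurableSet_singleton _))
  have hmC : MeasurableSet C := by
    rw [hCeq]
    exact (hX (measurableSet_singleton _)).inter ((hY 0) (measurableSet_singleton _))
  have hdBC : Disjoint B C := by
    rw [Set.disjoint_left]
    rintro ω ⟨h1, -⟩ ⟨h2, -⟩
    rw [h1] at h2
    exact absurd h2 (by decide)
  have hdABC : Disjoint A (B ∪ C) := by
    rw [Set.disjoint_left]
    rintro ω hωA hωBC
    have hlt : Y 0 ω < Y 1 ω := hωA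
    rw [Fin.lt_iff_val_lt_val] at hlt
    rcases hωBC with ⟨h1, h2⟩ | ⟨h1, h2⟩
    · rw [h1] at h2
      have : (Y 1 ω).val = 0 := by rw [h2]
      omega
    · rw [h1] at h2
      have h3 : (Y 0 ω).val = K - 1 := by rw [h2]
      have h4 : (Y 1 ω).val < K := (Y 1 ω).is_lt
      omega
  have hsum : P A + P B + P C ≤ 1 := by
    have h1 : P (A ∪ (B ∪ C)) = P A + (P B + P C) := by
      rw [measure_union hdABC (hmB.union hmC), measure_union hdBC hmC]
    calc P A + P B + P C = P (A ∪ (B ∪ C)) := by rw [h1]; ring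
      _ ≤ 1 := prob_le_one
  have hAfin : P A ≠ ⊤ := measure_ne_top P A
  have hBfin : P B ≠ ⊤ := measure_ne_top P B
  have hCfin : P C ≠ ⊤ := measure_ne_top P C
  have := ENNReal.toReal_mono (by norm_num) hsum
  rw [ENNReal.toReal_add (by finiteness) hCfin, ENNReal.toReal_add hAfin hBfin,
    ENNReal.toReal_one] at this
  linarith
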